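/- arXiv:2302.12745 — 9 statements merged into one kernel-verified Lean document; each statement's English description precedes it below -/
import Mathlib

section
/- If C₂ and C₄ are distinct checkpoints with the same slot C₂.t = C₄.t, and there exist a supermajority link C₁ → C₂ and a supermajority link C₃ → C₄ (for some checkpoints C₁, C₃), then the set of E1-slashable validators contains at least n/3 validators (i.e., 3·|{v : v is E1-slashable}| ≥ n). -/
/-- A checkpoint is a pair of a block and a slot. -/
structure Checkpoint (Block : Type*) where
  B : Block
  t : ℕ

/-- An FFG vote is a triple of a validator, a source checkpoint and a target checkpoint. -/
abbrev FFGVote (V Block : Type*) := V × Checkpoint Block × Checkpoint Block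

/-- Every FFG vote in the vote set satisfies `source.t < target.t` and `source.B ≼ target.B`. -/
def ValidVotes {V Block : Type*} [PartialOrder Block] (Votes : Set (FFGVote V Block)) : Prop :=
  ∀ p ∈ Votes, p.2.1.t < p.2.2.t ∧ p.2.1.B ≤ p.2.2.B

/-- There is a supermajority link `C₁ → C₂`: at least `2n/3` validators cast the FFG vote
`(v, C₁, C₂)`. -/
def SMLink {V Block : Type*} (n : ℕ) (Votes : Set (FFGVote V Block))
    (C₁ C₂ : Checkpoint Block) : Prop :=
  ∃ S : Finset V, 2 * n ≤ 3 * S.card ∧ ∀ v ∈ S, (v, C₁, C₂) ∈ Votes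

/-- A checkpoint `C` is justified if there is a chain of `k ≥ 0` supermajority links from the
genesis checkpoint `Cgen` to `C`. -/
def Justified {V Block : Type*} (n : ℕ) (Votes : Set (FFGVote V Block))
    (Cgen C : Checkpoint Block) : Prop :=
  Relation.ReflTransGen (SMLink n Votes) Cgen C

/-- A checkpoint `C` is finalized if it is justified and there is a supermajority link `C → C'`
with `C'.t = C.t + 1`. -/
def Finalized {V Block : Type*} (n : ℕ) (Votes : Set (FFGVote V Block))
    (Cgen C : Checkpoint Block) : Prop :=
  Justified n Votes Cgen C ∧ ∃ C' : Checkpoint Block, SMLink n Votes C C' ∧ C'.t = C.t + 1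

/-- `v` is E1-slashable (equivocation): `Votes` contains two distinct votes by `v` whose targets
have the same slot. -/
def E1Slashable {V Block : Type*} (Votes : Set (FFGVote V Block)) (v : V) : Prop :=
  ∃ p q : FFGVote V Block, p ∈ Votes ∧ q ∈ Votes ∧ p.1 = v ∧ q.1 = v ∧ p ≠ q ∧ p.2.2.t = q.2.2.t

/-- `v` is E2-slashable (surround voting): `Votes` contains votes `(v, C₁, C₂)` and `(v, C₃, C₄)`
with `C₃.t < C₁.t < C₂.t < C₄.t`. -/
def E2Slashable {V Block : Type*} (Votes : Set (FFGVote V Block)) (v : V) : Prop :=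
  ∃ C₁ C₂ C₃ C₄ : Checkpoint Block, (v, C₁, C₂) ∈ Votes ∧ (v, C₃, C₄) ∈ Votes ∧
    C₃.t < C₁.t ∧ C₁.t < C₂.t ∧ C₂.t < C₄.t

/-- If `C₂ ≠ C₄` have the same slot and there are supermajority links `C₁ → C₂` and `C₃ → C₄`,
then at least `n/3` validators are E1-slashable. -/
theorem equivocating_justifications_slashing
    {V Block : Type*} [Fintype V] [PartialOrder Block]
    (n : ℕ) (hn : Fintype.card V = n)
    (Votes : Set (FFGVote V Block)) (hvalid : ValidVotes Votes)
    (C₁ C₂ C₃ C₄ : Checkpoint Block)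
    (hne : C₂ ≠ C₄) (ht : C₂.t = C₄.t)
    (h12 : SMLink n Votes C₁ C₂) (h34 : SMLink n Votes C₃ C₄) :
    n ≤ 3 * {v : V | E1Slashable Votes v}.ncard := by
  classical
  obtain ⟨S₁, hS₁, hv₁⟩ := h12
  obtain ⟨S₂, hS₂, hv₂⟩ := h34
  have hsub : (S₁ ∩ S₂ : Finset V) ⊆ {v : V | E1Slashable Votes v}.toFinset := by
    intro v hv
    simp only [Finset.mem_inter] at hv
    simp only [Set.mem_toFinset, Set.mem_setOf_eq]
    refine ⟨(v, C₁, C₂), (v, C₃, C₄), hv₁ v hv.1, hv₂ v hv.2, rfl, rfl, ?_, ht⟩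
    intro h
    exact hne (congrArg (fun p => p.2.2) h)
  have hcard : (S₁ ∩ S₂).card ≤ {v : V | E1Slashable Votes v}.ncard := by
    rw [Set.ncard_eq_toFinset_card']
    exact Finset.card_le_card hsub
  have hunion : (S₁ ∪ S₂).card ≤ n := hn ▸ Finset.card_le_card (Finset.subset_univ _)
  have := Finset.card_inter_add_card_union S₁ S₂
  omega
end

section
/- Suppose fewer than n/3 validators are E1-slashable (i.e., 3·|{v : v is E1-slashable}| < n). Then any two justified checkpoints with the same slot are equal: if C and C' are justified and C.t = C'.t, then C = C'. -/
theorem sm_target_unique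
    {V Block : Type*} [Fintype V] [PartialOrder Block]
    (n : ℕ) (hn : Fintype.card V = n)
    (Votes : Set (FFGVote V Block))
    (hE1 : 3 * {v : V | E1Slashable Votes v}.ncard < n)
    {A A' C C' : Checkpoint Block}
    (h1 : SMLink n Votes A C) (h2 : SMLink n Votes A' C')
    (ht : C.t = C'.t) : C = C' := by
  classical
  obtain ⟨S, hS, hSv⟩ := h1
  obtain ⟨S', hS', hSv'⟩ := h2
  have hcard : n ≤ 3 * (S ∩ S').card := by
    have h := Finset.card_inter_add_card_union S S'
    have hU : (S ∪ S').card ≤ n := hn ▸ Finset.card_le_univ _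
    omega
  have hex : ∃ v ∈ S ∩ S', ¬ E1Slashable Votes v := by
    by_contra h
    push_neg at h
    have hsub : ((S ∩ S' : Finset V) : Set V) ⊆ {v : V | E1Slashable Votes v} := by
      intro v hv; exact h v hv
    have := Set.ncard_le_ncard hsub (Set.toFinite _)
    rw [Set.ncard_coe_finset] at this
    omega
  obtain ⟨v, hv, hns⟩ := hex
  rw [Finset.mem_inter] at hv
  by_contra hne
  exact hns ⟨(v, A, C), (v, A', C'), hSv v hv.1, hSv' v hv.2, rfl, rfl,
    by simp [Prod.ext_iff]; intro _ h; exact absurd h hne, ht⟩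

/-- If fewer than `n/3` validators are E1-slashable, then any two justified checkpoints with the
same slot are equal. -/
theorem justified_same_slot_unique
    {V Block : Type*} [Fintype V] [PartialOrder Block]
    (n : ℕ) (hn : Fintype.card V = n)
    (Votes : Set (FFGVote V Block)) (hvalid : ValidVotes Votes)
    (hE1 : 3 * {v : V | E1Slashable Votes v}.ncard < n)
    (Bgen : Block) (C C' : Checkpoint Block)
    (hC : Justified n Votes ⟨Bgen, 0⟩ C) (hC' : Justified n Votes ⟨Bgen, 0⟩ C')
    (ht : C.t = C'.t) :
    C = C' := by
  have hn0 : 0 < n := by omega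
  classical
  rcases Relation.ReflTransGen.cases_tail hC with h1 | ⟨b, _, hb⟩
  · rcases Relation.ReflTransGen.cases_tail hC' with h2 | ⟨b', _, hb'⟩
    · rw [h1, h2]
    · obtain ⟨S, hS, hSv⟩ := hb'
      have hpos : 0 < S.card := by omega
      obtain ⟨v, hv⟩ := Finset.card_pos.mp hpos
      have hlt := (hvalid _ (hSv v hv)).1
      simp only at hlt
      have : C'.t = 0 := by rw [← ht, h1]
      omega
  · rcases Relation.ReflTransGen.cases_tail hC' with h2 | ⟨b', _, hb'⟩
    · obtain ⟨S, hS, hSv⟩ := hb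
      have hpos : 0 < S.card := by omega
      obtain ⟨v, hv⟩ := Finset.card_pos.mp hpos
      have hlt := (hvalid _ (hSv v hv)).1
      simp only at hlt
      have : C.t = 0 := by rw [ht, h2]
      omega
    · exact sm_target_unique n hn Votes hE1 hb hb' ht
end

section
/- If there exist a supermajority link C₁ → C₂ and a supermajority link D₁ → D₂ whose slot intervals are nested, i.e., D₁.t < C₁.t < C₂.t < D₂.t, then the set of E2-slashable validators contains at least n/3 validators (i.e., 3·|{v : v is E2-slashable}| ≥ n). -/
/-- If there are supermajority links `C₁ → C₂` and `D₁ → D₂` with nested slot intervals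
`D₁.t < C₁.t < C₂.t < D₂.t`, then at least `n/3` validators are E2-slashable. -/
theorem surround_voting_slashing
    {V Block : Type*} [Fintype V] [PartialOrder Block]
    (n : ℕ) (hn : Fintype.card V = n)
    (Votes : Set (FFGVote V Block)) (hvalid : ValidVotes Votes)
    (C₁ C₂ D₁ D₂ : Checkpoint Block)
    (h1 : D₁.t < C₁.t) (h2 : C₁.t < C₂.t) (h3 : C₂.t < D₂.t)
    (hC : SMLink n Votes C₁ C₂) (hD : SMLink n Votes D₁ D₂) :
    n ≤ 3 * {v : V | E2Slashable Votes v}.ncard := by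
  classical
  obtain ⟨S, hS, hSv⟩ := hC
  obtain ⟨T, hT, hTv⟩ := hD
  have hsub : ((S ∩ T : Finset V) : Set V) ⊆ {v : V | E2Slashable Votes v} := by
    intro v hv
    simp only [Finset.coe_inter, Set.mem_inter_iff, Finset.mem_coe] at hv
    exact ⟨C₁, C₂, D₁, D₂, hSv v hv.1, hTv v hv.2, h1, h2, h3⟩
  have hcard : (S ∩ T).card ≤ {v : V | E2Slashable Votes v}.ncard := by
    have := Set.ncard_le_ncard hsub (Set.toFinite _)
    rwa [Set.ncard_coe_finset] at this
  have hunion : (S ∪ T).card ≤ n := hn ▸ Finset.card_le_univ _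
  have hie : S.card + T.card = (S ∪ T).card + (S ∩ T).card :=
    (Finset.card_union_add_card_inter S T).symm
  omega
end

section
/- (Accountable safety) If B and B' are conflicting blocks (neither B ≼ B' nor B' ≼ B) and there exist finalized checkpoints C and C' with C.B = B and C'.B = B', then the set of validators that are E1-slashable or E2-slashable contains at least n/3 validators (i.e., 3·|{v : v is E1-slashable or E2-slashable}| ≥ n). -/
/-- Accountable safety: if two conflicting blocks are both finalized, then at least `n/3`
validators are E1- or E2-slashable. -/
theorem accountable_safety
    {V Block : Type*} [Fintype V] [PartialOrder Block]
    (n : ℕ) (hn : Fintype.card V = n)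
    (Votes : Set (FFGVote V Block)) (hvalid : ValidVotes Votes)
    (Bgen : Block) (B B' : Block)
    (hconf : ¬ B ≤ B' ∧ ¬ B' ≤ B)
    (C C' : Checkpoint Block)
    (hC : Finalized n Votes ⟨Bgen, 0⟩ C) (hC' : Finalized n Votes ⟨Bgen, 0⟩ C')
    (hB : C.B = B) (hB' : C'.B = B') :
    n ≤ 3 * {v : V | E1Slashable Votes v ∨ E2Slashable Votes v}.ncard := by
  by_contra hcon
  push_neg at hcon
  rcases Nat.eq_zero_or_pos n with h0 | hnpos
  · omega
  classical
  set A : Finset V := {v : V | E1Slashable Votes v ∨ E2Slashable Votes v}.toFinset with hA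
  have hAcard : A.card = {v : V | E1Slashable Votes v ∨ E2Slashable Votes v}.ncard :=
    (Set.ncard_eq_toFinset_card' _).symm
  -- quorum intersection: any two supermajority links share an honest voter
  have hmeet : ∀ C₁ C₂ C₃ C₄ : Checkpoint Block, SMLink n Votes C₁ C₂ → SMLink n Votes C₃ C₄ →
      ∃ v, (v, C₁, C₂) ∈ Votes ∧ (v, C₃, C₄) ∈ Votes ∧
        ¬ E1Slashable Votes v ∧ ¬ E2Slashable Votes v := by
    intro C₁ C₂ C₃ C₄ h1 h2
    obtain ⟨S, hS, hSv⟩ := h1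
    obtain ⟨T, hT, hTv⟩ := h2
    have hcard : A.card < (S ∩ T).card := by
      have h1 := Finset.card_union_add_card_inter S T
      have h2 : (S ∪ T).card ≤ n := hn ▸ Finset.card_le_univ _
      omega
    obtain ⟨v, hvST, hvA⟩ : ∃ v ∈ S ∩ T, v ∉ A := by
      by_contra hc
      push_neg at hc
      exact absurd (Finset.card_le_card hc) (by omega)
    rw [Finset.mem_inter] at hvST
    rw [hA, Set.mem_toFinset, Set.mem_setOf_eq] at hvA
    push_neg at hvA
    exact ⟨v, hSv v hvST.1, hTv v hvST.2, hvA.1, hvA.2⟩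
  -- every supermajority link increases slot and extends block
  have hlink : ∀ C₁ C₂ : Checkpoint Block, SMLink n Votes C₁ C₂ →
      C₁.t < C₂.t ∧ C₁.B ≤ C₂.B := by
    intro C₁ C₂ ⟨S, hS, hv⟩
    have hne : S.Nonempty := by
      rw [← Finset.card_pos]; omega
    exact hvalid _ (hv _ hne.choose_spec)
  -- every justified checkpoint other than genesis has a justified predecessor
  have pred : ∀ Cx : Checkpoint Block, Justified n Votes ⟨Bgen, 0⟩ Cx → 0 < Cx.t →
      ∃ P, Justified n Votes ⟨Bgen, 0⟩ P ∧ SMLink n Votes P Cx := by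
    intro Cx h hpos
    rcases Relation.ReflTransGen.cases_tail h with h' | ⟨P, hP, hlk⟩
    · rw [h'] at hpos; simp at hpos
    · exact ⟨P, hP, hlk⟩
  have hjust0 : ∀ Cx : Checkpoint Block, Justified n Votes ⟨Bgen, 0⟩ Cx → Cx.t = 0 →
      Cx = ⟨Bgen, 0⟩ := by
    intro Cx h h0
    rcases Relation.ReflTransGen.cases_tail h with h' | ⟨P, hP, hlk⟩
    · exact h'
    · have := (hlink _ _ hlk).1; omega
  -- two justified checkpoints at the same slot are equal
  have same_slot : ∀ Ca Cb : Checkpoint Block, Justified n Votes ⟨Bgen, 0⟩ Ca →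
      Justified n Votes ⟨Bgen, 0⟩ Cb → Ca.t = Cb.t → Ca = Cb := by
    intro Ca Cb ha hb hteq
    by_contra hne
    rcases Nat.eq_zero_or_pos Ca.t with h0 | hpos
    · exact hne ((hjust0 Ca ha h0).trans (hjust0 Cb hb (by omega)).symm)
    · obtain ⟨P, hP, hlkP⟩ := pred Ca ha hpos
      obtain ⟨Q, hQ, hlkQ⟩ := pred Cb hb (by omega)
      obtain ⟨v, hv1, hv2, hE1, _⟩ := hmeet P Ca Q Cb hlkP hlkQ
      refine hE1 ⟨(v, P, Ca), (v, Q, Cb), hv1, hv2, rfl, rfl, ?_, hteq⟩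
      intro h
      exact hne (congrArg (fun p => p.2.2) h)
  -- key lemma: a justified checkpoint later than a finalized one extends its block
  have key : ∀ Cf D : Checkpoint Block, Justified n Votes ⟨Bgen, 0⟩ Cf → SMLink n Votes Cf D →
      D.t = Cf.t + 1 → ∀ t' (J : Checkpoint Block), J.t = t' →
      Justified n Votes ⟨Bgen, 0⟩ J → Cf.t < J.t → Cf.B ≤ J.B := by
    intro Cf D hCf hCD hDt t'
    induction t' using Nat.strong_induction_on with
    | _ t' ih =>
    intro J hJt hJ hlt
    obtain ⟨P, hP, hPJ⟩ := pred J hJ (by omega)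
    obtain ⟨v, hv1, hv2, hE1, hE2⟩ := hmeet Cf D P J hCD hPJ
    obtain ⟨hPJt, hPJB⟩ := hlink P J hPJ
    rcases eq_or_lt_of_le (show D.t ≤ J.t by omega) with heq | hlt2
    · -- same target slot: the two votes must coincide (else E1), so Cf = P
      have hsame : (Cf, D) = (P, J) := by
        by_contra hne
        refine hE1 ⟨(v, Cf, D), (v, P, J), hv1, hv2, rfl, rfl, ?_, heq⟩
        intro h
        exact hne (congrArg Prod.snd h)
      have h1 : Cf = P := congrArg Prod.fst hsame
      rw [h1]; exact hPJB
    · -- J.t > D.t: no surround vote forces Cf.t ≤ P.t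
      have hge : Cf.t ≤ P.t := by
        by_contra hlt3
        push_neg at hlt3
        exact hE2 ⟨Cf, D, P, J, hv1, hv2, hlt3, by omega, hlt2⟩
      rcases eq_or_lt_of_le hge with heq2 | hlt4
      · have hPC : P = Cf := same_slot P Cf hP hCf (by omega)
        rw [← hPC]; exact hPJB
      · exact le_trans (ih P.t (by omega) P rfl hP hlt4) hPJB
  obtain ⟨hCj, D, hCD, hDt⟩ := hC
  obtain ⟨hC'j, D', hC'D', hD't⟩ := hC'
  rcases lt_trichotomy C.t C'.t with h | h | h
  · have := key C D hCj hCD hDt C'.t C' rfl hC'j h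
    rw [hB, hB'] at this
    exact hconf.1 this
  · have hCC : C = C' := same_slot C C' hCj hC'j h
    refine hconf.1 ?_
    rw [← hB, ← hB', hCC]
  · have := key C' D' hC'j hC'D' hD't C.t C rfl hCj h
    rw [hB, hB'] at this
    exact hconf.2 this
end

section
/- Suppose fewer than n/3 validators are E1-slashable or E2-slashable (i.e., 3·|{v : v is E1-slashable or E2-slashable}| < n). If C is a finalized checkpoint, C' is a justified checkpoint, and C.t < C'.t, then C.B ≼ C'.B. -/
private lemma smlink_wf {V Block : Type*} [PartialOrder Block]
    {n : ℕ} (hn0 : 0 < n) {Votes : Set (FFGVote V Block)} (hvalid : ValidVotes Votes)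
    {C₁ C₂ : Checkpoint Block} (h : SMLink n Votes C₁ C₂) :
    C₁.t < C₂.t ∧ C₁.B ≤ C₂.B := by
  obtain ⟨S, hcard, hS⟩ := h
  have hpos : 0 < S.card := by omega
  obtain ⟨v, hv⟩ := Finset.card_pos.mp hpos
  exact hvalid _ (hS v hv)

private lemma exists_honest_double_vote {V Block : Type*} [Fintype V]
    {n : ℕ} (hn : Fintype.card V = n) {Votes : Set (FFGVote V Block)}
    (hslash : 3 * {v : V | E1Slashable Votes v ∨ E2Slashable Votes v}.ncard < n)
    {C₁ C₂ C₃ C₄ : Checkpoint Block}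
    (h1 : SMLink n Votes C₁ C₂) (h2 : SMLink n Votes C₃ C₄) :
    ∃ v : V, ¬ E1Slashable Votes v ∧ ¬ E2Slashable Votes v ∧
      (v, C₁, C₂) ∈ Votes ∧ (v, C₃, C₄) ∈ Votes := by
  classical
  obtain ⟨S₁, h₁c, h₁m⟩ := h1
  obtain ⟨S₂, h₂c, h₂m⟩ := h2
  have hunion : (S₁ ∪ S₂).card ≤ n := hn ▸ Finset.card_le_univ _
  have hie : (S₁ ∪ S₂).card + (S₁ ∩ S₂).card = S₁.card + S₂.card :=
    Finset.card_union_add_card_inter S₁ S₂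
  by_contra hcon
  push_neg at hcon
  have hsub : ↑(S₁ ∩ S₂) ⊆ {v : V | E1Slashable Votes v ∨ E2Slashable Votes v} := by
    intro v hv
    simp only [Finset.coe_inter, Set.mem_inter_iff, Finset.mem_coe] at hv
    by_contra hns
    simp only [Set.mem_setOf_eq] at hns
    push_neg at hns
    exact (hcon v hns.1 hns.2 (h₁m v hv.1)) (h₂m v hv.2)
  have hle := Set.ncard_le_ncard hsub (Set.toFinite _)
  rw [Set.ncard_coe_finset] at hle
  omega

private lemma justified_eq_of_t_eq {V Block : Type*} [Fintype V] [PartialOrder Block]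
    {n : ℕ} (hn : Fintype.card V = n) {Votes : Set (FFGVote V Block)}
    (hvalid : ValidVotes Votes)
    (hslash : 3 * {v : V | E1Slashable Votes v ∨ E2Slashable Votes v}.ncard < n)
    {Bgen : Block} {D D' : Checkpoint Block}
    (hD : Justified n Votes ⟨Bgen, 0⟩ D) (hD' : Justified n Votes ⟨Bgen, 0⟩ D')
    (ht : D.t = D'.t) : D = D' := by
  have hn0 : 0 < n := by omega
  rcases Relation.ReflTransGen.cases_tail hD with h | ⟨A, hA, hl⟩
  · rcases Relation.ReflTransGen.cases_tail hD' with h' | ⟨A', hA', hl'⟩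
    · rw [h, h']
    · exfalso
      have hw := smlink_wf hn0 hvalid hl'
      subst h
      have h0 : D'.t = 0 := ht.symm
      omega
  · rcases Relation.ReflTransGen.cases_tail hD' with h' | ⟨A', hA', hl'⟩
    · exfalso
      have hw := smlink_wf hn0 hvalid hl
      subst h'
      have h0 : D.t = 0 := ht
      omega
    · obtain ⟨v, hv1, hv2, hvote1, hvote2⟩ := exists_honest_double_vote hn hslash hl hl'
      by_cases heq : ((v, A, D) : FFGVote V Block) = (v, A', D')
      · exact congrArg (fun p => p.2.2) heq
      · exact absurd ⟨(v, A, D), (v, A', D'), hvote1, hvote2, rfl, rfl, heq, ht⟩ hv1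

/-- If fewer than `n/3` validators are E1- or E2-slashable, `C` is finalized, `C'` is justified,
and `C.t < C'.t`, then `C.B ≼ C'.B`. -/
theorem finalized_prefix_of_later_justified
    {V Block : Type*} [Fintype V] [PartialOrder Block]
    (n : ℕ) (hn : Fintype.card V = n)
    (Votes : Set (FFGVote V Block)) (hvalid : ValidVotes Votes)
    (hslash : 3 * {v : V | E1Slashable Votes v ∨ E2Slashable Votes v}.ncard < n)
    (Bgen : Block) (C C' : Checkpoint Block)
    (hC : Finalized n Votes ⟨Bgen, 0⟩ C) (hC' : Justified n Votes ⟨Bgen, 0⟩ C')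
    (ht : C.t < C'.t) :
    C.B ≤ C'.B := by
  have hn0 : 0 < n := by omega
  obtain ⟨hCj, C'', hlink'', hC''t⟩ := hC
  suffices H : ∀ m, ∀ D : Checkpoint Block, Justified n Votes ⟨Bgen, 0⟩ D → D.t = m →
      C.t < D.t → C.B ≤ D.B from H C'.t C' hC' rfl ht
  intro m
  induction m using Nat.strong_induction_on with
  | _ m ih =>
    intro D hD hDt hCD
    rcases Relation.ReflTransGen.cases_tail hD with h | ⟨A, hA, hl⟩
    · exfalso
      subst h
      exact Nat.not_lt_zero C.t hCD
    · have hAD := smlink_wf hn0 hvalid hl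
      rcases lt_trichotomy A.t C.t with hAt | hAt | hAt
      · exfalso
        obtain ⟨v, hv1, hv2, hvote1, hvote2⟩ :=
          exists_honest_double_vote hn hslash hlink'' hl
        have hwf'' := smlink_wf hn0 hvalid hlink''
        rcases eq_or_lt_of_le (show C''.t ≤ D.t by omega) with hEq | hLt
        · have hne : ((v, C, C'') : FFGVote V Block) ≠ (v, A, D) := by
            intro hpq
            have hCA : C = A := congrArg (fun p => p.2.1) hpq
            have : C.t = A.t := congrArg Checkpoint.t hCA
            omega
          exact hv1 ⟨(v, C, C''), (v, A, D), hvote1, hvote2, rfl, rfl, hne, hEq⟩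
        · exact hv2 ⟨C, C'', A, D, hvote1, hvote2, hAt, by omega, hLt⟩
      · have hAC : A = C := justified_eq_of_t_eq hn hvalid hslash hA hCj hAt
        rw [← hAC]
        exact hAD.2
      · exact (ih A.t (by omega) A hA rfl hAt).trans hAD.2
end

section
/- (Safety of the finalized chain) Suppose fewer than n/3 validators are E1-slashable or E2-slashable (i.e., 3·|{v : v is E1-slashable or E2-slashable}| < n). Then any two finalized blocks are comparable under the prefix order: if C and C' are finalized checkpoints, then C.B ≼ C'.B or C'.B ≼ C.B. -/
set_option linter.unusedSectionVars false

section Safety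

variable {V Block : Type*} [Fintype V] [PartialOrder Block]

lemma smlink_vote {n : ℕ} {Votes : Set (FFGVote V Block)} {C₁ C₂ : Checkpoint Block}
    (hn : 0 < n) (h : SMLink n Votes C₁ C₂) : ∃ v, (v, C₁, C₂) ∈ Votes := by
  obtain ⟨S, hcard, hS⟩ := h
  have hpos : 0 < S.card := by omega
  obtain ⟨v, hv⟩ := Finset.card_pos.mp hpos
  exact ⟨v, hS v hv⟩

lemma honest_common {n : ℕ} {Votes : Set (FFGVote V Block)}
    (hn : Fintype.card V = n)
    (hslash : 3 * {v : V | E1Slashable Votes v ∨ E2Slashable Votes v}.ncard < n)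
    {C₁ C₂ C₃ C₄ : Checkpoint Block}
    (h1 : SMLink n Votes C₁ C₂) (h2 : SMLink n Votes C₃ C₄) :
    ∃ v, (v, C₁, C₂) ∈ Votes ∧ (v, C₃, C₄) ∈ Votes ∧
      ¬ E1Slashable Votes v ∧ ¬ E2Slashable Votes v := by
  classical
  obtain ⟨S₁, hc1, hS1⟩ := h1
  obtain ⟨S₂, hc2, hS2⟩ := h2
  set R := {v : V | E1Slashable Votes v ∨ E2Slashable Votes v} with hR
  have hRfin : R.toFinset.card = R.ncard := (Set.ncard_eq_toFinset_card' R).symm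
  have hun : (S₁ ∪ S₂).card ≤ n := by
    rw [← hn, ← Finset.card_univ]
    exact Finset.card_le_card (Finset.subset_univ _)
  have hiu := Finset.card_inter_add_card_union S₁ S₂
  have hlt : R.toFinset.card < (S₁ ∩ S₂).card := by omega
  have hex : ∃ v ∈ S₁ ∩ S₂, v ∉ R.toFinset := by
    by_contra hcon
    push_neg at hcon
    have hsub : S₁ ∩ S₂ ⊆ R.toFinset := fun v hv => hcon v hv
    have := Finset.card_le_card hsub
    omega
  obtain ⟨v, hv, hvR⟩ := hex
  rw [Finset.mem_inter] at hv
  have hvR' : v ∉ R := fun h => hvR (Set.mem_toFinset.mpr h)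
  refine ⟨v, hS1 v hv.1, hS2 v hv.2, ?_, ?_⟩
  · exact fun h => hvR' (Or.inl h)
  · exact fun h => hvR' (Or.inr h)

lemma justified_zero {n : ℕ} {Votes : Set (FFGVote V Block)} {Cgen X : Checkpoint Block}
    (hn : 0 < n) (hvalid : ValidVotes Votes)
    (h : Justified n Votes Cgen X) (hX : X.t = 0) : X = Cgen := by
  induction h with
  | refl => rfl
  | @tail Y Z hYZ hlink ih =>
    obtain ⟨v, hv⟩ := smlink_vote hn hlink
    have h2 : Y.t < Z.t := (hvalid _ hv).1
    omega

lemma justified_link {n : ℕ} {Votes : Set (FFGVote V Block)} {Cgen X : Checkpoint Block}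
    (hg : Cgen.t = 0) (h : Justified n Votes Cgen X) (hX : 0 < X.t) :
    ∃ Y, Justified n Votes Cgen Y ∧ SMLink n Votes Y X := by
  rcases Relation.ReflTransGen.cases_tail h with rfl | ⟨Y, hY, hlink⟩
  · omega
  · exact ⟨Y, hY, hlink⟩

lemma justified_same_slot {n : ℕ} {Votes : Set (FFGVote V Block)} {Cgen A C : Checkpoint Block}
    (hn : Fintype.card V = n) (hg : Cgen.t = 0) (hvalid : ValidVotes Votes)
    (hslash : 3 * {v : V | E1Slashable Votes v ∨ E2Slashable Votes v}.ncard < n)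
    (hA : Justified n Votes Cgen A) (hC : Justified n Votes Cgen C)
    (ht : A.t = C.t) : A = C := by
  have hnpos : 0 < n := by omega
  by_cases h0 : A.t = 0
  · rw [justified_zero hnpos hvalid hA h0, justified_zero hnpos hvalid hC (by omega)]
  · obtain ⟨E, hE, hEA⟩ := justified_link hg hA (by omega)
    obtain ⟨F, hF, hFC⟩ := justified_link hg hC (by omega)
    obtain ⟨v, hv1, hv2, hE1, _⟩ := honest_common hn hslash hEA hFC
    by_cases heq : ((v, E, A) : FFGVote V Block) = (v, F, C)
    · exact congrArg (fun p => p.2.2) heq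
    · exact absurd ⟨(v, E, A), (v, F, C), hv1, hv2, rfl, rfl, heq, ht⟩ hE1

lemma finalized_le_justified {n : ℕ} {Votes : Set (FFGVote V Block)}
    {Cgen : Checkpoint Block}
    (hn : Fintype.card V = n) (hg : Cgen.t = 0) (hvalid : ValidVotes Votes)
    (hslash : 3 * {v : V | E1Slashable Votes v ∨ E2Slashable Votes v}.ncard < n) :
    ∀ m (C C' : Checkpoint Block), C'.t ≤ m →
      Finalized n Votes Cgen C → Justified n Votes Cgen C' → C.t < C'.t →
      C.B ≤ C'.B := by
  have hnpos : 0 < n := by omega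
  intro m
  induction m with
  | zero => intro C C' hle _ _ hlt; omega
  | succ m ih =>
    intro C C' hle hC hC' hlt
    obtain ⟨hCj, D, hCD, hDt⟩ := hC
    obtain ⟨A, hA, hAC'⟩ := justified_link hg hC' (by omega)
    obtain ⟨v, hv1, hv2, hE1, hE2⟩ := honest_common hn hslash hAC' hCD
    have hvalAC' := hvalid _ hv1
    have hAt : A.t < C'.t := hvalAC'.1
    have hAB : A.B ≤ C'.B := hvalAC'.2
    by_cases heq : ((v, A, C') : FFGVote V Block) = (v, C, D)
    · have : A = C := congrArg (fun p => p.2.1) heq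
      rw [← this]
      exact hAB
    · have hne : C'.t ≠ D.t := fun h =>
        hE1 ⟨(v, A, C'), (v, C, D), hv1, hv2, rfl, rfl, heq, h⟩
    -- so C'.t > D.t = C.t + 1
      have hDlt : D.t < C'.t := by omega
      have hAge : C.t ≤ A.t := by
        by_contra hcon
        exact hE2 ⟨C, D, A, C', hv2, hv1, by omega, by omega, hDlt⟩
      rcases eq_or_lt_of_le hAge with heqt | hltt
      · have : A = C := justified_same_slot hn hg hvalid hslash hA hCj heqt.symm
        rw [← this]
        exact hAB
      · have hAle : A.t ≤ m := by omega
        exact le_trans (ih C A hAle ⟨hCj, D, hCD, hDt⟩ hA hltt) hAB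

end Safety

/-- Safety of the finalized chain: if fewer than `n/3` validators are E1- or E2-slashable, then
any two finalized blocks are comparable under the prefix order. -/
theorem finalized_chain_safety
    {V Block : Type*} [Fintype V] [PartialOrder Block]
    (n : ℕ) (hn : Fintype.card V = n)
    (Votes : Set (FFGVote V Block)) (hvalid : ValidVotes Votes)
    (hslash : 3 * {v : V | E1Slashable Votes v ∨ E2Slashable Votes v}.ncard < n)
    (Bgen : Block) (C C' : Checkpoint Block)
    (hC : Finalized n Votes ⟨Bgen, 0⟩ C) (hC' : Finalized n Votes ⟨Bgen, 0⟩ C') :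
    C.B ≤ C'.B ∨ C'.B ≤ C.B := by
  have hg : (⟨Bgen, 0⟩ : Checkpoint Block).t = 0 := rfl
  rcases lt_trichotomy C.t C'.t with hlt | heq | hgt
  · exact Or.inl (finalized_le_justified hn hg hvalid hslash C'.t C C' le_rfl hC hC'.1 hlt)
  · have : C = C' := justified_same_slot hn hg hvalid hslash hC.1 hC'.1 heq
    exact Or.inl (this ▸ le_rfl)
  · exact Or.inr (finalized_le_justified hn hg hvalid hslash C.t C' C le_rfl hC' hC.1 hgt)
end

section
/- Suppose fewer than n/3 validators are E1-slashable, E2-slashable, or E3-slashable (i.e., 3·|{v : v is E1-, E2-, or E3-slashable}| < n). If C is an ack-finalized checkpoint, C' is a justified checkpoint, and C.t < C'.t, then C.B ≼ C'.B. -/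
/-- There is a supermajority acknowledgment of `C`: at least `2n/3` validators `v` have
`(v, C) ∈ Acks`. -/
def SMAck {V Block : Type*} (n : ℕ) (Acks : Set (V × Checkpoint Block))
    (C : Checkpoint Block) : Prop :=
  ∃ S : Finset V, 2 * n ≤ 3 * S.card ∧ ∀ v ∈ S, (v, C) ∈ Acks

/-- `v` is E3-slashable: `Votes` contains a vote `(v, C₁, C₂)` and `Acks` contains `(v, C)` with
`C₁.t < C.t < C₂.t`. -/
def E3Slashable {V Block : Type*} (Votes : Set (FFGVote V Block))
    (Acks : Set (V × Checkpoint Block)) (v : V) : Prop :=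
  ∃ C₁ C₂ C : Checkpoint Block, (v, C₁, C₂) ∈ Votes ∧ (v, C) ∈ Acks ∧ C₁.t < C.t ∧ C.t < C₂.t

/-- A checkpoint is ack-finalized if it is justified and either is finalized or has a
supermajority acknowledgment. -/
def AckFinalized {V Block : Type*} (n : ℕ) (Votes : Set (FFGVote V Block))
    (Acks : Set (V × Checkpoint Block)) (Cgen C : Checkpoint Block) : Prop :=
  Justified n Votes Cgen C ∧ (Finalized n Votes Cgen C ∨ SMAck n Acks C)

/-- Quorum intersection: two supermajority sets contain a common validator outside a set of
fewer than `n/3` bad validators. -/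
lemma aux_quorum {V : Type*} [Fintype V] (n : ℕ) (hn : Fintype.card V = n)
    (Bad : Set V) (hB : 3 * Bad.ncard < n) (S T : Finset V)
    (hS : 2 * n ≤ 3 * S.card) (hT : 2 * n ≤ 3 * T.card) :
    ∃ v, v ∈ S ∧ v ∈ T ∧ v ∉ Bad := by
  classical
  have hcard : (S ∪ T).card + (S ∩ T).card = S.card + T.card :=
    Finset.card_union_add_card_inter S T
  have hle : (S ∪ T).card ≤ n := hn ▸ Finset.card_le_univ _
  have hinter : n ≤ 3 * (S ∩ T).card := by omega
  by_contra h
  push_neg at h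
  have hsub : (↑(S ∩ T) : Set V) ⊆ Bad := by
    intro v hv
    simp only [Finset.coe_inter, Set.mem_inter_iff, Finset.mem_coe] at hv
    by_contra hvB
    exact hvB (h v hv.1 hv.2)
  have := Set.ncard_le_ncard hsub Bad.toFinite
  rw [Set.ncard_coe_finset] at this
  omega

lemma aux_link_lt {V Block : Type*} [PartialOrder Block] {n : ℕ} (hn : 0 < n)
    {Votes : Set (FFGVote V Block)} (hvalid : ValidVotes Votes)
    {C₁ C₂ : Checkpoint Block} (h : SMLink n Votes C₁ C₂) : C₁.t < C₂.t ∧ C₁.B ≤ C₂.B := by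
  obtain ⟨S, hS, hv⟩ := h
  have : S.Nonempty := by
    rw [← Finset.card_pos]; omega
  obtain ⟨v, hvS⟩ := this
  exact hvalid _ (hv v hvS)

lemma aux_justified_zero {V Block : Type*} [PartialOrder Block] {n : ℕ} (hn : 0 < n)
    {Votes : Set (FFGVote V Block)} (hvalid : ValidVotes Votes) {Bgen : Block}
    {C : Checkpoint Block} (h : Justified n Votes ⟨Bgen, 0⟩ C) (ht : C.t = 0) :
    C = ⟨Bgen, 0⟩ := by
  rcases Relation.ReflTransGen.cases_tail h with h | ⟨b, _, hlink⟩
  · exact h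
  · have := (aux_link_lt hn hvalid hlink).1
    omega

lemma aux_justified_tail {V Block : Type*} {n : ℕ}
    {Votes : Set (FFGVote V Block)} {Cgen C : Checkpoint Block}
    (h : Justified n Votes Cgen C) (hne : C ≠ Cgen) :
    ∃ C₁, Justified n Votes Cgen C₁ ∧ SMLink n Votes C₁ C := by
  rcases Relation.ReflTransGen.cases_tail h with h | ⟨b, hb, hlink⟩
  · exact absurd h hne
  · exact ⟨b, hb, hlink⟩

/-- Two justified checkpoints at the same slot are equal, given few slashable validators. -/
lemma aux_eq_of_same_slot {V Block : Type*} [Fintype V] [PartialOrder Block]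
    (n : ℕ) (hn : Fintype.card V = n)
    (Votes : Set (FFGVote V Block)) (hvalid : ValidVotes Votes)
    (Acks : Set (V × Checkpoint Block))
    (hslash : 3 * {v : V | E1Slashable Votes v ∨ E2Slashable Votes v ∨
      E3Slashable Votes Acks v}.ncard < n)
    (Bgen : Block) (C C' : Checkpoint Block)
    (hJ : Justified n Votes ⟨Bgen, 0⟩ C) (hJ' : Justified n Votes ⟨Bgen, 0⟩ C')
    (ht : C.t = C'.t) : C = C' := by
  have hnpos : 0 < n := by omega
  rcases Nat.eq_zero_or_pos C.t with h0 | hpos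
  · rw [aux_justified_zero hnpos hvalid hJ h0,
      aux_justified_zero hnpos hvalid hJ' (by omega)]
  · obtain ⟨X, _, hlX⟩ := aux_justified_tail hJ (by intro h; rw [h] at hpos; simp at hpos)
    obtain ⟨Y, _, hlY⟩ := aux_justified_tail hJ' (by intro h; rw [h] at ht; simp at ht; omega)
    obtain ⟨S, hS, hvS⟩ := hlX
    obtain ⟨T, hT, hvT⟩ := hlY
    obtain ⟨v, hv1, hv2, hv3⟩ := aux_quorum n hn _ hslash S T hS hT
    have hpq : ((v, X, C) : FFGVote V Block) = (v, Y, C') := by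
      by_contra hne
      exact hv3 (Or.inl ⟨(v, X, C), (v, Y, C'), hvS v hv1, hvT v hv2, rfl, rfl, hne, ht⟩)
    simpa using congrArg (fun p => p.2.2) hpq

/-- If fewer than `n/3` validators are E1-, E2-, or E3-slashable, `C` is ack-finalized, `C'` is
justified, and `C.t < C'.t`, then `C.B ≼ C'.B`. -/
theorem ack_finalized_prefix_of_later_justified
    {V Block : Type*} [Fintype V] [PartialOrder Block]
    (n : ℕ) (hn : Fintype.card V = n)
    (Votes : Set (FFGVote V Block)) (hvalid : ValidVotes Votes)
    (Acks : Set (V × Checkpoint Block))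
    (hslash : 3 * {v : V | E1Slashable Votes v ∨ E2Slashable Votes v ∨
      E3Slashable Votes Acks v}.ncard < n)
    (Bgen : Block) (C C' : Checkpoint Block)
    (hC : AckFinalized n Votes Acks ⟨Bgen, 0⟩ C)
    (hC' : Justified n Votes ⟨Bgen, 0⟩ C')
    (ht : C.t < C'.t) :
    C.B ≤ C'.B := by
  have hnpos : 0 < n := by omega
  suffices H : ∀ m (C' : Checkpoint Block), Justified n Votes ⟨Bgen, 0⟩ C' → C'.t = m →
      C.t < C'.t → C.B ≤ C'.B from H C'.t C' hC' rfl ht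
  intro m
  induction m using Nat.strong_induction_on with
  | _ m IH =>
    intro C' hJ' hm ht'
    obtain ⟨C₁, hJ₁, hlink⟩ := aux_justified_tail hJ' (by
      intro h; rw [h] at ht'; simp at ht')
    obtain ⟨S, hS, hvS⟩ := hlink
    have hC1link : C₁.t < C'.t ∧ C₁.B ≤ C'.B := aux_link_lt hnpos hvalid ⟨S, hS, hvS⟩
    -- derive C.t ≤ C₁.t
    have hle : C.t ≤ C₁.t := by
      rcases hC.2 with ⟨_, D, hlinkCD, hD⟩ | ⟨T, hT, hack⟩
      · -- finalized case
        by_contra hlt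
        push_neg at hlt
        obtain ⟨T, hT, hvT⟩ := hlinkCD
        obtain ⟨v, hv1, hv2, hv3⟩ := aux_quorum n hn _ hslash S T hS hT
        have hvote1 : (v, C₁, C') ∈ Votes := hvS v hv1
        have hvote2 : (v, C, D) ∈ Votes := hvT v hv2
        rcases lt_trichotomy C'.t D.t with h | h | h
        · omega
        · exact hv3 (Or.inl ⟨(v, C₁, C'), (v, C, D), hvote1, hvote2, rfl, rfl,
            by intro he; have := congrArg (fun p => p.2.1.t) he; simp at this; omega, h⟩)
        · exact hv3 (Or.inr (Or.inl ⟨C, D, C₁, C', hvote2, hvote1, hlt, by omega, by omega⟩))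
      · -- ack case
        obtain ⟨v, hv1, hv2, hv3⟩ := aux_quorum n hn _ hslash S T hS hT
        by_contra hlt
        push_neg at hlt
        exact hv3 (Or.inr (Or.inr ⟨C₁, C', C, hvS v hv1, hack v hv2, hlt, ht'⟩))
    rcases eq_or_lt_of_le hle with heq | hlt
    · have : C = C₁ := aux_eq_of_same_slot n hn Votes hvalid Acks hslash Bgen C C₁ hC.1 hJ₁ heq
      rw [this]; exact hC1link.2
    · exact le_trans (IH C₁.t (by omega) C₁ hJ₁ rfl hlt) hC1link.2
end

section
/- (Safety of the finalized chain with acknowledgments) Suppose fewer than n/3 validators are E1-slashable, E2-slashable, or E3-slashable (i.e., 3·|{v : v is E1-, E2-, or E3-slashable}| < n). Then any two ack-finalized blocks are comparable under the prefix order: if C and C' are ack-finalized checkpoints, then C.B ≼ C'.B or C'.B ≼ C.B. -/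
section Aux

variable {V Block : Type*} [Fintype V] [PartialOrder Block]

lemma smlink_lt {n : ℕ} (hn : 0 < n) {Votes : Set (FFGVote V Block)}
    (hvalid : ValidVotes Votes) {C₁ C₂ : Checkpoint Block} (h : SMLink n Votes C₁ C₂) :
    C₁.t < C₂.t ∧ C₁.B ≤ C₂.B := by
  obtain ⟨S, hS, hv⟩ := h
  have hne : S.Nonempty := by
    rw [Finset.nonempty_iff_ne_empty]
    rintro rfl
    simp only [Finset.card_empty, Nat.mul_zero] at hS
    omega
  obtain ⟨v, hvS⟩ := hne
  exact hvalid _ (hv v hvS)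

lemma quorum_inter {n : ℕ} (hn : Fintype.card V = n)
    (Bad : Set V) (hbad : 3 * Bad.ncard < n)
    (S T : Finset V) (hS : 2 * n ≤ 3 * S.card) (hT : 2 * n ≤ 3 * T.card) :
    ∃ v, v ∈ S ∧ v ∈ T ∧ v ∉ Bad := by
  classical
  by_contra h
  push_neg at h
  have hsub : ((S ∩ T : Finset V) : Set V) ⊆ Bad := by
    intro v hv
    simp only [Finset.coe_inter, Set.mem_inter_iff, Finset.mem_coe] at hv
    exact h v hv.1 hv.2
  have h1 : (S ∩ T).card ≤ Bad.ncard := by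
    calc (S ∩ T).card = ((S ∩ T : Finset V) : Set V).ncard := (Set.ncard_coe_finset _).symm
      _ ≤ Bad.ncard := Set.ncard_le_ncard hsub (Set.toFinite Bad)
  have h2 : (S ∪ T).card + (S ∩ T).card = S.card + T.card :=
    Finset.card_union_add_card_inter S T
  have h3 : (S ∪ T).card ≤ n := hn ▸ Finset.card_le_univ _
  omega

/-- Two justified checkpoints at the same slot are equal (honest-majority version). -/
lemma justified_unique_slot {n : ℕ} (hn : Fintype.card V = n)
    {Votes : Set (FFGVote V Block)} (hvalid : ValidVotes Votes)
    {Acks : Set (V × Checkpoint Block)}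
    (hslash : 3 * {v : V | E1Slashable Votes v ∨ E2Slashable Votes v ∨
      E3Slashable Votes Acks v}.ncard < n)
    {Bgen : Block} {C D : Checkpoint Block}
    (hC : Justified n Votes ⟨Bgen, 0⟩ C) (hD : Justified n Votes ⟨Bgen, 0⟩ D)
    (ht : C.t = D.t) : C = D := by
  have hn0 : 0 < n := by omega
  rcases hC.cases_tail with rfl | ⟨E, _, hEC⟩
  · rcases hD.cases_tail with rfl | ⟨F, _, hFD⟩
    · rfl
    · have := (smlink_lt hn0 hvalid hFD).1
      simp only [← ht] at this
      omega
  · rcases hD.cases_tail with rfl | ⟨F, _, hFD⟩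
    · have := (smlink_lt hn0 hvalid hEC).1
      simp only [ht] at this
      omega
    · obtain ⟨S, hScard, hSv⟩ := hEC
      obtain ⟨T, hTcard, hTv⟩ := hFD
      obtain ⟨v, hvS, hvT, hvhonest⟩ := quorum_inter hn _ hslash S T hScard hTcard
      by_contra hne
      exact hvhonest (Or.inl ⟨(v, E, C), (v, F, D), hSv v hvS, hTv v hvT, rfl, rfl,
        by simp; rintro rfl rfl; exact hne rfl, ht⟩)

/-- Main safety lemma: an ack-finalized checkpoint is a prefix of any justified checkpoint
at a strictly later slot. -/
lemma ackfin_prefix_justified {n : ℕ} (hn : Fintype.card V = n)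
    {Votes : Set (FFGVote V Block)} (hvalid : ValidVotes Votes)
    {Acks : Set (V × Checkpoint Block)}
    (hslash : 3 * {v : V | E1Slashable Votes v ∨ E2Slashable Votes v ∨
      E3Slashable Votes Acks v}.ncard < n)
    {Bgen : Block} {C : Checkpoint Block}
    (hC : AckFinalized n Votes Acks ⟨Bgen, 0⟩ C) :
    ∀ C' : Checkpoint Block, Justified n Votes ⟨Bgen, 0⟩ C' → C.t < C'.t → C.B ≤ C'.B := by
  have hn0 : 0 < n := by omega
  suffices H : ∀ k : ℕ, ∀ C' : Checkpoint Block, C'.t ≤ k →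
      Justified n Votes ⟨Bgen, 0⟩ C' → C.t < C'.t → C.B ≤ C'.B by
    exact fun C' hj hlt => H C'.t C' le_rfl hj hlt
  intro k
  induction k with
  | zero => intro C' hle _ hlt; omega
  | succ k ih =>
    intro C' hle hj hlt
    rcases hj.cases_tail with rfl | ⟨D, hDj, hDC'⟩
    · simp at hlt
    · have hDlt := smlink_lt hn0 hvalid hDC'
      rcases lt_trichotomy C.t D.t with h1 | h1 | h1
      · exact le_trans (ih D (by omega) hDj h1) hDlt.2
      · have : C = D := justified_unique_slot hn hvalid hslash hC.1 hDj h1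
        rw [this]; exact hDlt.2
      · -- D.t < C.t : derive a contradiction via slashing
        exfalso
        obtain ⟨T, hTcard, hTv⟩ := hDC'
        rcases hC.2 with ⟨_, C'', ⟨S, hScard, hSv⟩, hC''t⟩ | ⟨S, hScard, hSv⟩
        · -- finalized case
          obtain ⟨v, hvS, hvT, hvhonest⟩ := quorum_inter hn _ hslash S T hScard hTcard
          rcases Nat.lt_or_ge (C.t + 1) C'.t with h2 | h2
          · -- surround: (v, C, C'') surrounded by (v, D, C')
            exact hvhonest (Or.inr (Or.inl ⟨C, C'', D, C', hSv v hvS, hTv v hvT, h1,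
              by omega, by omega⟩))
          · -- same target slot: equivocation (or equal votes, impossible)
            have hC't : C'.t = C.t + 1 := by omega
            refine hvhonest (Or.inl ⟨(v, C, C''), (v, D, C'), hSv v hvS, hTv v hvT, rfl, rfl,
              ?_, show C''.t = C'.t by omega⟩)
            simp only [ne_eq, Prod.mk.injEq, true_and, not_and]
            rintro rfl
            omega
        · -- ack case : E3
          obtain ⟨v, hvT, hvS, hvhonest⟩ := quorum_inter hn _ hslash T S hTcard hScard
          exact hvhonest (Or.inr (Or.inr ⟨D, C', C, hTv v hvT, hSv v hvS, h1, hlt⟩))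

end Aux

/-- Safety of the finalized chain with acknowledgments: if fewer than `n/3` validators are E1-,
E2-, or E3-slashable, then any two ack-finalized blocks are comparable under the prefix order. -/
theorem ack_finalized_chain_safety
    {V Block : Type*} [Fintype V] [PartialOrder Block]
    (n : ℕ) (hn : Fintype.card V = n)
    (Votes : Set (FFGVote V Block)) (hvalid : ValidVotes Votes)
    (Acks : Set (V × Checkpoint Block))
    (hslash : 3 * {v : V | E1Slashable Votes v ∨ E2Slashable Votes v ∨
      E3Slashable Votes Acks v}.ncard < n)
    (Bgen : Block) (C C' : Checkpoint Block)
    (hC : AckFinalized n Votes Acks ⟨Bgen, 0⟩ C)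
    (hC' : AckFinalized n Votes Acks ⟨Bgen, 0⟩ C') :
    C.B ≤ C'.B ∨ C'.B ≤ C.B := by
  rcases lt_trichotomy C.t C'.t with h | h | h
  · exact Or.inl (ackfin_prefix_justified hn hvalid hslash hC C' hC'.1 h)
  · exact Or.inl (le_of_eq (congrArg Checkpoint.B
      (justified_unique_slot hn hvalid hslash hC.1 hC'.1 h)))
  · exact Or.inr (ackfin_prefix_justified hn hvalid hslash hC' C hC.1 h)
end

section
/- Suppose fewer than n/3 validators are E1-slashable (i.e., 3·|{v : v is E1-slashable}| < n). If C and C' are justified checkpoints whose blocks conflict (neither C.B ≼ C'.B nor C'.B ≼ C.B), then C.t ≠ C'.t. -/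
/-- If fewer than `n/3` validators are E1-slashable, then two justified checkpoints whose blocks
conflict have distinct slots. -/
theorem conflicting_justified_distinct_slots
    {V Block : Type*} [Fintype V] [PartialOrder Block]
    (n : ℕ) (hn : Fintype.card V = n)
    (Votes : Set (FFGVote V Block)) (hvalid : ValidVotes Votes)
    (hE1 : 3 * {v : V | E1Slashable Votes v}.ncard < n)
    (Bgen : Block) (C C' : Checkpoint Block)
    (hC : Justified n Votes ⟨Bgen, 0⟩ C) (hC' : Justified n Votes ⟨Bgen, 0⟩ C')
    (hconf : ¬ C.B ≤ C'.B ∧ ¬ C'.B ≤ C.B) :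
    C.t ≠ C'.t := by
  classical
  intro ht
  have hnpos : 0 < n := lt_of_le_of_lt (Nat.zero_le _) hE1
  have hne : C ≠ C' := by
    intro h; exact hconf.1 (h ▸ le_refl _)
  -- each justified checkpoint is either genesis or the target of an SM link
  have hcases : ∀ D : Checkpoint Block, Justified n Votes ⟨Bgen, 0⟩ D →
      D = ⟨Bgen, 0⟩ ∨ ∃ A, SMLink n Votes A D := by
    intro D hD
    rcases hD.cases_tail with h | ⟨c, _, h⟩
    · exact Or.inl h
    · exact Or.inr ⟨c, h⟩
  -- an SM link into D with positive voter set gives a vote, hence 0 < D.t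
  have hlink_pos : ∀ A D : Checkpoint Block, SMLink n Votes A D → 0 < D.t := by
    intro A D ⟨S, hScard, hSvote⟩
    have hS : S.Nonempty := by
      rw [← Finset.card_pos]; omega
    obtain ⟨v, hv⟩ := hS
    exact lt_of_le_of_lt (Nat.zero_le _) (hvalid _ (hSvote v hv)).1
  -- neither C nor C' is genesis
  have hCnotgen : ∃ A, SMLink n Votes A C := by
    rcases hcases C hC with h | h
    · rcases hcases C' hC' with h' | h'
      · exact absurd (h.trans h'.symm) hne
      · obtain ⟨A', hA'⟩ := h'
        have := hlink_pos _ _ hA'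
        rw [← ht, h] at this; simp at this
    · exact h
  have hC'notgen : ∃ A, SMLink n Votes A C' := by
    rcases hcases C' hC' with h | h
    · obtain ⟨A, hA⟩ := hCnotgen
      have := hlink_pos _ _ hA
      rw [ht, h] at this; simp at this
    · exact h
  obtain ⟨A, S, hScard, hSvote⟩ := hCnotgen
  obtain ⟨A', S', hS'card, hS'vote⟩ := hC'notgen
  -- every validator in S ∩ S' is E1-slashable
  have hsub : (↑(S ∩ S') : Set V) ⊆ {v : V | E1Slashable Votes v} := by
    intro v hv
    simp only [Finset.coe_inter, Set.mem_inter_iff, Finset.mem_coe] at hv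
    refine ⟨(v, A, C), (v, A', C'), hSvote v hv.1, hS'vote v hv.2, rfl, rfl, ?_, ht⟩
    intro h
    exact hne (congrArg (fun p => p.2.2) h)
  have hcard : (↑(S ∩ S') : Set V).ncard ≤ {v : V | E1Slashable Votes v}.ncard :=
    Set.ncard_le_ncard hsub (Set.toFinite _)
  rw [Set.ncard_coe_finset] at hcard
  have hunion : (S ∪ S').card ≤ n := by
    rw [← hn]; exact Finset.card_le_univ _
  have := Finset.card_inter_add_card_union S S'
  omega
end
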